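/- For every real number L > 0, there are infinitely many integers n ≥ 2 such that Z(n−1) > L · Z(n); equivalently, the ratio Z(n−1)/Z(n) of consecutive values of Z is unbounded. -/

import Mathlib

/-- The m-th triangular number. -/
def T (m : ℕ) : ℕ := m * (m + 1) / 2

/-- The pseudo-Smarandache function: the least positive m with n ∣ T m. -/
noncomputable def Z (n : ℕ) : ℕ := sInf {m : ℕ | 0 < m ∧ n ∣ T m}

/-!
Take `a = 2 ^ j + 1`. Since `2 ^ s ≡ 2 ^ j [MOD a ^ 2]` for infinitely many `s` (Euler), we can
write `2 ^ s = 2 ^ j + 2 a² c`, i.e. `2 ^ s + 1 = a (m + 1)` with `m = 2 a c`. Then `2 a (m + 1)`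
divides `m (m + 1)`, so `Z (2 ^ s + 1) ≤ m < 2 ^ s / 2 ^ j`, while `Z (2 ^ s) ≥ 2 ^ s` because
`2 ^ (s + 1)` must divide one of the coprime factors `m`, `m + 1` of `2 T m`.
-/

open Nat

lemma two_mul_T (m : ℕ) : 2 * T m = m * (m + 1) :=
  Nat.mul_div_cancel' (even_mul_succ_self m).two_dvd

lemma dvd_T_iff {n m : ℕ} : n ∣ T m ↔ 2 * n ∣ m * (m + 1) := by
  rw [← two_mul_T, Nat.mul_dvd_mul_iff_left two_pos]

lemma Z_le {n m : ℕ} (hm : 0 < m) (h : n ∣ T m) : Z n ≤ m :=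
  Nat.sInf_le ⟨hm, h⟩

lemma Z_pos_and_dvd_T {n : ℕ} (hn : n ≠ 0) : 0 < Z n ∧ n ∣ T (Z n) :=
  Nat.sInf_mem (s := {m | 0 < m ∧ n ∣ T m})
    ⟨2 * n, by omega, dvd_T_iff.2 ⟨2 * n + 1, by ring⟩⟩

lemma two_pow_le_Z (s : ℕ) : 2 ^ s ≤ Z (2 ^ s) := by
  obtain ⟨hpos, hdvd⟩ := Z_pos_and_dvd_T (pow_ne_zero s two_ne_zero)
  have hcop : Coprime (Z (2 ^ s)) (Z (2 ^ s) + 1) :=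
    coprime_self_add_right.2 (coprime_one_right _)
  rw [dvd_T_iff, ← pow_succ',
    hcop.isPrimePow_dvd_mul (prime_two.isPrimePow.pow (succ_ne_zero s))] at hdvd
  have hs : 2 ^ s < 2 ^ (s + 1) := Nat.pow_lt_pow_succ one_lt_two
  rcases hdvd with h | h
  · have := le_of_dvd hpos h
    omega
  · have := le_of_dvd (succ_pos _) h
    omega

lemma Z_mul_add_one_le {a m : ℕ} (hm : 0 < m) (h : 2 * a ∣ m) : Z (a * (m + 1)) ≤ m :=
  Z_le hm (dvd_T_iff.2 (by rw [← mul_assoc]; exact mul_dvd_mul_right h _))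

lemma exists_lt_pow_modEq_pow {x b : ℕ} (hb : 0 < b) (hxb : Coprime x b) (j N : ℕ) :
    ∃ s, N < s ∧ x ^ s ≡ x ^ j [MOD b] := by
  have he : 0 < φ b := totient_pos.2 hb
  refine ⟨j + (N + 1) * φ b, by nlinarith, ?_⟩
  rw [pow_add, pow_mul']
  simpa using ((ModEq.pow_totient hxb).pow (N + 1)).mul_left (x ^ j)

lemma exists_two_pow_eq {j : ℕ} (hj : 1 ≤ j) (N : ℕ) :
    ∃ s c, N < s ∧ 0 < c ∧ 2 ^ s = 2 ^ j + 2 * (2 ^ j + 1) ^ 2 * c := by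
  have hodd : Coprime 2 ((2 ^ j + 1) ^ 2) := by
    have := dvd_pow_self 2 (by omega : j ≠ 0)
    exact (prime_two.coprime_iff_not_dvd.2 (by omega)).pow_right 2
  obtain ⟨s, hs, hmod⟩ := exists_lt_pow_modEq_pow (by positivity) hodd j (N + j)
  have hlt : 2 ^ j < 2 ^ s := Nat.pow_lt_pow_right one_lt_two (by omega)
  have hsq : (2 ^ j + 1) ^ 2 ∣ 2 ^ s - 2 ^ j := (modEq_iff_dvd' hlt.le).1 hmod.symm
  have htwo : 2 ∣ 2 ^ s - 2 ^ j :=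
    Nat.dvd_sub (dvd_pow_self 2 (by omega)) (dvd_pow_self 2 (by omega))
  obtain ⟨c, hc⟩ := hodd.mul_dvd_of_dvd_of_dvd htwo hsq
  refine ⟨s, c, by omega, pos_of_ne_zero ?_, ?_⟩
  · rintro rfl
    omega
  · omega

lemma exists_two_pow_mul_Z_lt {j : ℕ} (hj : 1 ≤ j) (N : ℕ) :
    ∃ s, N < s ∧ 2 ^ j * Z (2 ^ s + 1) < Z (2 ^ s) := by
  obtain ⟨s, c, hNs, hc, hs⟩ := exists_two_pow_eq hj N
  have hm : 0 < 2 * (2 ^ j + 1) * c := by positivity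
  have hn : 2 ^ s + 1 = (2 ^ j + 1) * (2 * (2 ^ j + 1) * c + 1) := by
    rw [hs]
    ring
  refine ⟨s, hNs, ?_⟩
  calc 2 ^ j * Z (2 ^ s + 1) ≤ 2 ^ j * (2 * (2 ^ j + 1) * c) := by
        rw [hn]
        exact Nat.mul_le_mul_left _ (Z_mul_add_one_le hm (dvd_mul_right _ _))
    _ < (2 ^ j + 1) * (2 * (2 ^ j + 1) * c) := by gcongr; omega
    _ = 2 * (2 ^ j + 1) ^ 2 * c := by ring
    _ < 2 ^ s := by rw [hs]; exact Nat.lt_add_of_pos_left (by positivity)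
    _ ≤ Z (2 ^ s) := two_pow_le_Z s

theorem stmt_10_general (L : ℝ) :
    {n : ℕ | 2 ≤ n ∧ (Z (n - 1) : ℝ) > L * (Z n : ℝ)}.Infinite := by
  obtain ⟨j, hj⟩ := pow_unbounded_of_one_lt L one_lt_two
  refine Set.infinite_of_forall_exists_gt fun N => ?_
  obtain ⟨s, hNs, hlt⟩ := exists_two_pow_mul_Z_lt (j := j + 1) (by omega) N
  have hs : N < 2 ^ s := hNs.trans s.lt_two_pow_self
  refine ⟨2 ^ s + 1, ⟨by omega, ?_⟩, by omega⟩
  rw [Nat.add_sub_cancel]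
  calc L * Z (2 ^ s + 1) ≤ 2 ^ (j + 1) * Z (2 ^ s + 1) := by
        gcongr
        exact hj.le.trans (pow_le_pow_right₀ one_le_two j.le_succ)
    _ < Z (2 ^ s) := by exact_mod_cast hlt

theorem stmt_10 (L : ℝ) (hL : 0 < L) :
    {n : ℕ | 2 ≤ n ∧ (Z (n - 1) : ℝ) > L * (Z n : ℝ)}.Infinite :=
  stmt_10_general L
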